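/- For real x > 0, E₁(x) = −γ − ln x + ∑_{k=1}^∞ (−1)^{k+1} x^k/(k·k!), where E₁(x) = ∫_x^∞ e^{-t}/t dt. -/

import Mathlib

/-!
Integration by parts against `log` turns both `E₁(x)` and `Ein(x) = ∫₀ˣ (1 - e^{-t}) / t dt`
into pieces of `∫₀^∞ log t · e^{-t} dt = Γ'(1) = -γ`:
`E₁(x) = ∫ₓ^∞ log t · e^{-t} dt - e^{-x} log x` and
`Ein(x) = (1 - e^{-x}) log x - ∫₀ˣ log t · e^{-t} dt`, so `E₁(x) + log x - Ein(x) = -γ`.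
Integrating the exponential series of `(1 - e^{-t}) / t` termwise gives the series for `Ein(x)`.
-/

open MeasureTheory Real Set Filter Topology
open scoped Nat

lemma abs_log_le_two_mul_rpow_neg_half_add_self {t : ℝ} (ht : 0 < t) :
    |log t| ≤ 2 * t ^ (-(1 / 2 : ℝ)) + t := by
  have hupper : log t ≤ t := (log_le_sub_one_of_pos ht).trans (by linarith)
  have hlower : -log t ≤ 2 * t ^ (-(1 / 2 : ℝ)) := by
    have := log_le_rpow_div (inv_nonneg.2 ht.le) one_half_pos
    rw [log_inv, inv_rpow ht.le, ← rpow_neg ht.le] at this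
    linarith
  have : 0 ≤ t ^ (-(1 / 2 : ℝ)) := by positivity
  exact abs_le.2 ⟨by linarith, by linarith⟩

lemma integrableOn_log_mul_exp_neg : IntegrableOn (fun t => log t * exp (-t)) (Ioi 0) := by
  refine (((GammaIntegral_convergent one_half_pos).const_mul 2).add
    (GammaIntegral_convergent two_pos)).mono' (by fun_prop) ?_
  filter_upwards [ae_restrict_mem measurableSet_Ioi] with t (ht : 0 < t)
  rw [norm_mul, norm_of_nonneg (exp_pos _).le, norm_eq_abs]
  calc |log t| * exp (-t) ≤ (2 * t ^ (-(1 / 2 : ℝ)) + t) * exp (-t) := by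
        gcongr; exact abs_log_le_two_mul_rpow_neg_half_add_self ht
    _ = 2 * (exp (-t) * t ^ ((1 / 2 : ℝ) - 1)) + exp (-t) * t ^ ((2 : ℝ) - 1) := by
        norm_num; ring

lemma integral_log_mul_exp_neg :
    ∫ t in Ioi 0, log t * exp (-t) = -eulerMascheroniConstant := by
  have hGammaIntegral : Complex.GammaIntegral =ᶠ[𝓝 1] Complex.Gamma := by
    filter_upwards [Complex.continuous_re.isOpen_preimage _ isOpen_Ioi |>.mem_nhds
      (by norm_num : (1 : ℂ).re ∈ Ioi 0)] with s hs using (Complex.Gamma_eq_integral hs).symm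
  have hderiv := (Complex.hasDerivAt_GammaIntegral (s := 1) (by norm_num)).congr_of_eventuallyEq
    hGammaIntegral.symm |>.unique Complex.hasDerivAt_Gamma_one
  simp only [sub_self, Complex.cpow_zero, one_mul, ← Complex.ofReal_mul,
    integral_complex_ofReal] at hderiv
  exact_mod_cast hderiv

lemma integrableOn_exp_neg_div_Ioi {x : ℝ} (hx : 0 < x) :
    IntegrableOn (fun t => exp (-t) / t) (Ioi x) := by
  refine ((exp_neg_integrableOn_Ioi x one_pos).div_const x).mono'
    ((measurable_neg.exp.div measurable_id).aestronglyMeasurable) ?_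
  filter_upwards [ae_restrict_mem measurableSet_Ioi] with t (ht : x < t)
  rw [norm_of_nonneg (div_nonneg (exp_pos _).le (hx.trans ht).le), neg_one_mul]
  gcongr

lemma tendsto_exp_neg_mul_log_atTop : Tendsto (fun t => exp (-t) * log t) atTop (𝓝 0) := by
  refine squeeze_zero' ?_ ?_ (by simpa using tendsto_pow_mul_exp_neg_atTop_nhds_zero 1)
  · filter_upwards [eventually_ge_atTop 1] with t ht
    exact mul_nonneg (exp_pos _).le (log_nonneg ht)
  · filter_upwards [eventually_gt_atTop 0] with t ht
    rw [mul_comm]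
    gcongr
    exact (log_le_sub_one_of_pos ht).trans (by linarith)

lemma tendsto_one_sub_exp_neg_mul_log_nhdsGT_zero :
    Tendsto (fun t => (1 - exp (-t)) * log t) (𝓝[>] 0) (𝓝 0) := by
  have hmul_log : Tendsto (fun t => t * log t) (𝓝[>] 0) (𝓝 0) := by
    simpa using continuous_mul_log.continuousWithinAt (s := Ioi 0) (x := 0) |>.tendsto
  refine squeeze_zero_norm' ?_ (by simpa using hmul_log.norm)
  filter_upwards [self_mem_nhdsWithin] with t (ht : 0 < t)
  have : 0 ≤ 1 - exp (-t) := by simpa using exp_le_one_iff.2 (neg_nonpos.2 ht.le)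
  rw [norm_mul, norm_of_nonneg this, norm_eq_abs, abs_of_pos ht]
  gcongr
  linarith [add_one_le_exp (-t)]

lemma integral_Ioi_exp_neg_div {x : ℝ} (hx : 0 < x) :
    ∫ t in Ioi x, exp (-t) / t = (∫ t in Ioi x, log t * exp (-t)) - exp (-x) * log x := by
  have hderiv : ∀ t ∈ Ici x, HasDerivAt (fun t => exp (-t) * log t)
      (exp (-t) / t - log t * exp (-t)) t := fun t ht =>
    ((hasDerivAt_neg t).exp.fun_mul (hasDerivAt_log (hx.trans_le ht).ne')).congr_deriv (by ring)
  have hint := (integrableOn_exp_neg_div_Ioi hx).sub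
    (integrableOn_log_mul_exp_neg.mono_set (Ioi_subset_Ioi hx.le))
  have hftc := integral_Ioi_of_hasDerivAt_of_tendsto' hderiv hint tendsto_exp_neg_mul_log_atTop
  rw [integral_sub (integrableOn_exp_neg_div_Ioi hx)
    (integrableOn_log_mul_exp_neg.mono_set (Ioi_subset_Ioi hx.le))] at hftc
  linarith

lemma intervalIntegrable_one_sub_exp_neg_div {x : ℝ} (hx : 0 ≤ x) :
    IntervalIntegrable (fun t => (1 - exp (-t)) / t) volume 0 x := by
  rw [intervalIntegrable_iff_integrableOn_Ioc_of_le hx]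
  refine Measure.integrableOn_of_bounded (M := 1) measure_Ioc_lt_top.ne
    ((measurable_const.sub measurable_neg.exp).div measurable_id).aestronglyMeasurable ?_
  filter_upwards [ae_restrict_mem measurableSet_Ioc] with t ht
  obtain ⟨ht, -⟩ := ht
  have : 0 ≤ 1 - exp (-t) := by simpa using exp_le_one_iff.2 (neg_nonpos.2 ht.le)
  rw [norm_of_nonneg (by positivity), div_le_one ht]
  linarith [add_one_le_exp (-t)]

lemma integral_one_sub_exp_neg_div {x : ℝ} (hx : 0 < x) :
    ∫ t in (0)..x, (1 - exp (-t)) / t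
      = (1 - exp (-x)) * log x - ∫ t in (0)..x, log t * exp (-t) := by
  have hderiv : ∀ t ∈ Ioo 0 x, HasDerivAt (fun t => (1 - exp (-t)) * log t)
      (log t * exp (-t) + (1 - exp (-t)) / t) t := fun t ht =>
    ((hasDerivAt_neg t).exp.const_sub 1 |>.fun_mul (hasDerivAt_log ht.1.ne')).congr_deriv
      (by ring)
  have hlog_int : IntervalIntegrable (fun t => log t * exp (-t)) volume 0 x :=
    (intervalIntegrable_iff_integrableOn_Ioc_of_le hx.le).2
      (integrableOn_log_mul_exp_neg.mono_set Ioc_subset_Ioi_self)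
  have hcont : ContinuousAt (fun t => (1 - exp (-t)) * log t) x := by fun_prop
  have hftc := intervalIntegral.integral_eq_sub_of_hasDerivAt_of_tendsto hx hderiv
    (hlog_int.add (intervalIntegrable_one_sub_exp_neg_div hx.le))
    tendsto_one_sub_exp_neg_mul_log_nhdsGT_zero (hcont.tendsto.mono_left nhdsWithin_le_nhds)
  rw [intervalIntegral.integral_add hlog_int (intervalIntegrable_one_sub_exp_neg_div hx.le)]
    at hftc
  linarith

lemma hasSum_one_sub_exp_neg_div {t : ℝ} (ht : t ≠ 0) :
    HasSum (fun k : ℕ => (-1 : ℝ) ^ (k + 1 + 1) * t ^ k / (k + 1)!) ((1 - exp (-t)) / t) := by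
  have hexp : HasSum (fun n : ℕ => (-t) ^ n / n !) (exp (-t)) := by
    rw [exp_eq_exp_ℝ]
    exact NormedSpace.expSeries_div_hasSum_exp (-t)
  have htail := ((hasSum_nat_add_iff' 1).2 hexp).neg.div_const t
  rw [Finset.sum_range_one, pow_zero, Nat.factorial_zero, Nat.cast_one, div_one, neg_sub] at htail
  exact htail.congr_fun fun k => by field_simp; ring

lemma hasSum_integral_one_sub_exp_neg_div {x : ℝ} (hx : 0 ≤ x) :
    HasSum (fun k : ℕ => (-1 : ℝ) ^ (k + 1 + 1) * x ^ (k + 1) / ((k + 1) * (k + 1)!))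
      (∫ t in (0)..x, (1 - exp (-t)) / t) := by
  set F : ℕ → ℝ → ℝ := fun k t => (-1 : ℝ) ^ (k + 1 + 1) * t ^ k / (k + 1)! with hF
  have hF_integral (k : ℕ) : ∫ t in (0)..x, F k t
      = (-1 : ℝ) ^ (k + 1 + 1) * x ^ (k + 1) / ((k + 1) * (k + 1)!) := by
    simp only [hF, intervalIntegral.integral_div, intervalIntegral.integral_const_mul,
      integral_pow]
    field_simp
    ring
  have hF_norm_integral (k : ℕ) :
      ∫ t in (0)..x, ‖F k t‖ = x ^ (k + 1) / ((k + 1) * (k + 1)!) := by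
    rw [intervalIntegral.integral_congr (g := fun t => t ^ k / (k + 1)!) fun t ht => ?_]
    · simp only [intervalIntegral.integral_div, integral_pow]
      field_simp
      ring
    · rw [uIcc_of_le hx] at ht
      simp [F, abs_of_nonneg ht.1]
  have hsummable : Summable fun k : ℕ => x ^ (k + 1) / ((k + 1) * (k + 1)!) := by
    refine ((summable_nat_add_iff 1).2 (summable_pow_div_factorial x)).of_nonneg_of_le
      (fun k => by positivity) fun k => ?_
    gcongr
    exact le_mul_of_one_le_left (by positivity) (by linarith [k.cast_nonneg (α := ℝ)])
  have hsum : HasSum (fun k => ∫ t in Ioc 0 x, F k t) (∫ t in Ioc 0 x, ∑' k, F k t) :=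
    hasSum_integral_of_summable_integral_norm
      (fun k => (by fun_prop : Continuous (F k)).integrableOn_Ioc)
    (by simpa only [← intervalIntegral.integral_of_le hx, hF_norm_integral] using hsummable)
  simp only [← intervalIntegral.integral_of_le hx, hF_integral] at hsum
  convert hsum using 1
  refine intervalIntegral.integral_congr_ae (ae_of_all _ fun t ht => ?_)
  rw [uIoc_of_le hx] at ht
  exact ((hasSum_one_sub_exp_neg_div ht.1.ne').tsum_eq).symm

theorem E1_series (x : ℝ) (hx : 0 < x) :
    ∫ t in Set.Ioi x, Real.exp (-t) / t
      = -Real.eulerMascheroniConstant - Real.log x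
        + ∑' k : ℕ, (-1 : ℝ) ^ (k + 1 + 1) * x ^ (k + 1)
            / ((k + 1) * Nat.factorial (k + 1)) := by
  have hsplit : ∫ t in Ioi 0, log t * exp (-t)
      = (∫ t in (0)..x, log t * exp (-t)) + ∫ t in Ioi x, log t * exp (-t) := by
    rw [intervalIntegral.integral_of_le hx.le, ← setIntegral_union (Ioc_disjoint_Ioi le_rfl)
      measurableSet_Ioi (integrableOn_log_mul_exp_neg.mono_set Ioc_subset_Ioi_self)
      (integrableOn_log_mul_exp_neg.mono_set (Ioi_subset_Ioi hx.le)), Ioc_union_Ioi_eq_Ioi hx.le]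
  rw [integral_Ioi_exp_neg_div hx, (hasSum_integral_one_sub_exp_neg_div hx.le).tsum_eq,
    integral_one_sub_exp_neg_div hx, ← integral_log_mul_exp_neg, hsplit]
  ring
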